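/- Let G be a one-dimensional simplicial complex which is a Barycentric refinement, with connection matrix L. Then the number of connected components b0 of G equals the multiplicity of the eigenvalue 1 of L, and the genus b1 (first Betti number) equals the multiplicity of the eigenvalue -1 of L. -/

import Mathlib

/-!
Write `B` for the unsigned incidence matrix of the graph `Γ` (edges × simplices). Since two
distinct edges of `Γ` share at most one vertex, the connection matrix has the block form
`L = [[1, Bᵀ], [B, B Bᵀ - 1]]`, and a direct computation using `ker (Bᵀ B) = ker B` shows that
the `1`-eigenvectors of `L` are the `(u, 0)` with `B u = 0`, while its `(-1)`-eigenvectors are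
the `(0, w)` with `Bᵀ w = 0`. Every edge of `Γ` joins a simplex of even cardinality to one of
odd cardinality, so rescaling rows and columns by the signs `(-1) ^ #x` turns `B` into the
signed incidence matrix `d0`. Hence `B`, `Bᵀ`, `d0ᵀ d0` and `d0 d0ᵀ` all have the same rank,
and rank–nullity gives the two equalities.
-/

open Module Matrix LinearMap Finset

theorem Finset.card_inter_pair_le_one {α : Type*} [DecidableEq α] {a b c d : α}
    (h : s(a, b) ≠ s(c, d)) : #({a, b} ∩ {c, d}) ≤ 1 := by
  rw [card_le_one]
  intro x hx y hy
  simp only [mem_inter, mem_insert, mem_singleton] at hx hy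
  rw [ne_eq, Sym2.eq_iff] at h
  grind

theorem Finset.singleton_inter_nonempty {α : Type*} [DecidableEq α] {a : α} {s : Finset α} :
    ({a} ∩ s).Nonempty ↔ a ∈ s := by
  rw [singleton_inter]
  split_ifs with ha <;> simp [ha]

theorem Submodule.finrank_prod_bot {R M N : Type*} [Ring R] [AddCommGroup M] [Module R M]
    [AddCommGroup N] [Module R N] (p : Submodule R M) :
    finrank R (p.prod (⊥ : Submodule R N)) = finrank R p := by
  rw [← map_inl]
  exact (equivMapOfInjective _ inl_injective p).finrank_eq.symm

theorem Submodule.finrank_bot_prod {R M N : Type*} [Ring R] [AddCommGroup M] [Module R M]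
    [AddCommGroup N] [Module R N] (q : Submodule R N) :
    finrank R ((⊥ : Submodule R M).prod q) = finrank R q := by
  rw [← map_inr]
  exact (equivMapOfInjective _ inr_injective q).finrank_eq.symm

theorem Matrix.isUnit_det_diagonal_neg_one_pow {R ι : Type*} [CommRing R] [Fintype ι]
    [DecidableEq ι] (k : ι → ℕ) : IsUnit (diagonal fun i => (-1 : R) ^ k i).det := by
  rw [← Matrix.isUnit_iff_isUnit_det, isUnit_diagonal, Pi.isUnit_iff]
  exact fun i => isUnit_neg_one.pow _

theorem Matrix.finrank_ker_mulVecLin_eq_of_rank_eq {K l m n : Type*} [Field K] [Fintype n]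
    {A : Matrix l n K} {B : Matrix m n K} (h : A.rank = B.rank) :
    finrank K (ker A.mulVecLin) = finrank K (ker B.mulVecLin) := by
  have hA := A.mulVecLin.finrank_range_add_finrank_ker
  have hB := B.mulVecLin.finrank_range_add_finrank_ker
  unfold Matrix.rank at h
  omega

theorem Matrix.transpose_mulVec_mulVec_eq_zero_iff {K m n : Type*} [Field K] [LinearOrder K]
    [IsStrictOrderedRing K] [Fintype m] [Fintype n] (A : Matrix m n K) (v : n → K) :
    Aᵀ *ᵥ (A *ᵥ v) = 0 ↔ A *ᵥ v = 0 := by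
  rw [mulVec_mulVec]
  exact SetLike.ext_iff.mp (ker_mulVecLin_transpose_mul_self A) v

section BlockEigenspaces

variable {K : Type*} [Field K] [LinearOrder K] [IsStrictOrderedRing K]
  {m n : Type*} [Fintype m] [Fintype n] [DecidableEq m] [DecidableEq n]

theorem fromBlocks_mulVec_eq_self_iff (B : Matrix m n K) (u : n → K) (w : m → K) :
    fromBlocks 1 Bᵀ B (B * Bᵀ - 1) *ᵥ Sum.elim u w = Sum.elim u w ↔ B *ᵥ u = 0 ∧ w = 0 := by
  simp only [fromBlocks_mulVec, Sum.elim_comp_inl, Sum.elim_comp_inr, Sum.elim_eq_iff,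
    one_mulVec, sub_mulVec, ← mulVec_mulVec, add_eq_left]
  constructor
  · rintro ⟨hw, huw⟩
    rw [hw, mulVec_zero] at huw
    have huw : B *ᵥ u = (2 : K) • w := by linear_combination (norm := module) huw
    have hu : B *ᵥ u = 0 := by
      rw [← transpose_mulVec_mulVec_eq_zero_iff, huw, mulVec_smul, hw, smul_zero]
    refine ⟨hu, ?_⟩
    rwa [hu, eq_comm, smul_eq_zero, or_iff_right two_ne_zero] at huw
  · rintro ⟨hu, rfl⟩
    simp [hu]

theorem fromBlocks_mulVec_eq_neg_self_iff (B : Matrix m n K) (u : n → K) (w : m → K) :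
    fromBlocks 1 Bᵀ B (B * Bᵀ - 1) *ᵥ Sum.elim u w = -Sum.elim u w ↔ u = 0 ∧ Bᵀ *ᵥ w = 0 := by
  simp only [fromBlocks_mulVec, Sum.elim_comp_inl, Sum.elim_comp_inr, ← Sum.elim_neg_neg,
    Sum.elim_eq_iff, one_mulVec, sub_mulVec, ← mulVec_mulVec]
  constructor
  · rintro ⟨hu, hw⟩
    have hu : Bᵀ *ᵥ w = (-2 : K) • u := by linear_combination (norm := module) hu
    rw [hu, mulVec_smul] at hw
    have hBu : B *ᵥ u = 0 := by linear_combination (norm := module) -hw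
    have hw : Bᵀ *ᵥ w = 0 := by
      rw [← transpose_mulVec_mulVec_eq_zero_iff, transpose_transpose, hu, mulVec_smul, hBu,
        smul_zero]
    refine ⟨?_, hw⟩
    rwa [hw, eq_comm, smul_eq_zero, or_iff_right (by norm_num)] at hu
  · rintro ⟨rfl, hw⟩
    simp [hw]

theorem finrank_eigenspace_fromBlocks_one (B : Matrix m n K) :
    finrank K (End.eigenspace (toLin' (fromBlocks 1 Bᵀ B (B * Bᵀ - 1))) 1) =
      finrank K (ker B.mulVecLin) := by
  have heig : End.eigenspace (toLin' (fromBlocks 1 Bᵀ B (B * Bᵀ - 1))) 1 =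
      ((ker B.mulVecLin).prod ⊥).comap
        (LinearEquiv.sumArrowLequivProdArrow n m K K).toLinearMap := by
    ext x
    rw [End.mem_eigenspace_iff, one_smul, toLin'_apply, ← Sum.elim_comp_inl_inr x,
      fromBlocks_mulVec_eq_self_iff]
    simp only [Submodule.mem_comap, Submodule.mem_prod, mem_ker, mulVecLin_apply,
      Submodule.mem_bot]
    rfl
  rw [heig, Submodule.comap_equiv_eq_map_symm, LinearEquiv.finrank_map_eq,
    Submodule.finrank_prod_bot]

theorem finrank_eigenspace_fromBlocks_neg_one (B : Matrix m n K) :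
    finrank K (End.eigenspace (toLin' (fromBlocks 1 Bᵀ B (B * Bᵀ - 1))) (-1)) =
      finrank K (ker Bᵀ.mulVecLin) := by
  have heig : End.eigenspace (toLin' (fromBlocks 1 Bᵀ B (B * Bᵀ - 1))) (-1) =
      ((⊥ : Submodule K (n → K)).prod (ker Bᵀ.mulVecLin)).comap
        (LinearEquiv.sumArrowLequivProdArrow n m K K).toLinearMap := by
    ext x
    rw [End.mem_eigenspace_iff, neg_one_smul, toLin'_apply, ← Sum.elim_comp_inl_inr x,
      fromBlocks_mulVec_eq_neg_self_iff]
    simp only [Submodule.mem_comap, Submodule.mem_prod, mem_ker, mulVecLin_apply,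
      Submodule.mem_bot]
    rfl
  rw [heig, Submodule.comap_equiv_eq_map_symm, LinearEquiv.finrank_map_eq,
    Submodule.finrank_bot_prod]

end BlockEigenspaces

section Incidence

variable (R : Type*) {X E : Type*} [DecidableEq X]

def unsignedIncidence [Zero R] [One R] (t h : E → X) : Matrix E X R :=
  of fun e v => if v ∈ ({t e, h e} : Finset X) then 1 else 0

def cellVertices (t h : E → X) : X ⊕ E → Finset X :=
  Sum.elim (fun v => {v}) (fun e => {t e, h e})

def connectionMatrix [Zero R] [One R] (t h : E → X) : Matrix (X ⊕ E) (X ⊕ E) R :=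
  of fun z w => if (cellVertices t h z ∩ cellVertices t h w).Nonempty then 1 else 0

variable {R} [CommRing R] [Fintype X]

theorem unsignedIncidence_eq_diagonal_mul_mul_diagonal [Fintype E] [DecidableEq E]
    {t h : E → X} (deg : X → ℕ) (hdeg : ∀ e, Odd (deg (t e) + deg (h e)))
    (d : Matrix E X R) (hd : ∀ e v, d e v = if v = h e then 1 else if v = t e then -1 else 0) :
    unsignedIncidence R t h =
      diagonal (fun e => (-1 : R) ^ deg (h e)) * d * diagonal (fun v => (-1 : R) ^ deg v) := by
  ext e v
  rw [mul_diagonal, diagonal_mul, hd, unsignedIncidence, of_apply]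
  by_cases hv : v = h e
  · subst hv
    simp [← pow_add, Even.neg_one_pow ⟨_, rfl⟩]
  · by_cases hv' : v = t e
    · subst hv'
      simp [hv, ← pow_add, add_comm (deg (h e)), (hdeg e).neg_one_pow]
    · simp [hv, hv']

theorem rank_unsignedIncidence [Fintype E] [DecidableEq E]
    {t h : E → X} (deg : X → ℕ) (hdeg : ∀ e, Odd (deg (t e) + deg (h e)))
    (d : Matrix E X R) (hd : ∀ e v, d e v = if v = h e then 1 else if v = t e then -1 else 0) :
    (unsignedIncidence R t h).rank = d.rank := by
  rw [unsignedIncidence_eq_diagonal_mul_mul_diagonal deg hdeg d hd,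
    rank_mul_eq_left_of_isUnit_det _ _ (isUnit_det_diagonal_neg_one_pow _),
    rank_mul_eq_right_of_isUnit_det _ _ (isUnit_det_diagonal_neg_one_pow _)]

theorem unsignedIncidence_mul_transpose_apply (t h : E → X) (e f : E) :
    (unsignedIncidence R t h * (unsignedIncidence R t h)ᵀ) e f =
      #(({t e, h e} : Finset X) ∩ {t f, h f}) := by
  simp only [mul_apply, transpose_apply, unsignedIncidence, of_apply, mul_ite, mul_one, mul_zero,
    ← ite_and, ← mem_inter]
  rw [sum_boole, filter_mem_eq_inter, univ_inter, inter_comm]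

theorem connectionMatrix_eq_fromBlocks [DecidableEq E] {t h : E → X}
    (hne : ∀ e, t e ≠ h e) (hinj : Function.Injective fun e => s(t e, h e)) :
    connectionMatrix R t h =
      fromBlocks 1 (unsignedIncidence R t h)ᵀ (unsignedIncidence R t h)
        (unsignedIncidence R t h * (unsignedIncidence R t h)ᵀ - 1) := by
  ext (v | e) (w | f)
  · simp [connectionMatrix, cellVertices, one_apply, singleton_inter_nonempty]
  · simp [connectionMatrix, cellVertices, unsignedIncidence, singleton_inter_nonempty]
  · simp [connectionMatrix, cellVertices, unsignedIncidence, inter_comm _ {w},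
      singleton_inter_nonempty]
  · change (if ({t e, h e} ∩ {t f, h f} : Finset X).Nonempty then (1 : R) else 0) = _
    rw [fromBlocks_apply₂₂, Matrix.sub_apply, unsignedIncidence_mul_transpose_apply, one_apply]
    by_cases hef : e = f
    · subst hef
      rw [inter_self, if_pos (insert_nonempty _ _), card_pair (hne e), if_pos rfl]
      norm_num
    · rw [if_neg hef, sub_zero]
      rcases Nat.le_one_iff_eq_zero_or_eq_one.mp (card_inter_pair_le_one (hinj.ne hef))
        with h0 | h1
      · rw [card_eq_zero] at h0
        simp [h0]
      · rw [if_pos (card_pos.mp (by omega)), h1, Nat.cast_one]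

end Incidence

theorem connection_hears_betti_1dim_general {V : Type*} [DecidableEq V]
    (K : Finset (Finset V))
    (hK1 : ∀ x ∈ K, x.card = 1 ∨ x.card = 2)
    (Γ : SimpleGraph {x // x ∈ K})
    (hΓ : ∀ x y, Γ.Adj x y ↔ ((x : Finset V) ⊂ (y : Finset V) ∨ (y : Finset V) ⊂ (x : Finset V)))
    (E : Type*) [Fintype E] [DecidableEq E]
    (t h : E → {x // x ∈ K})
    (hth : ∀ e, Γ.Adj (t e) (h e))
    (hbij : ∀ u v, Γ.Adj u v → ∃! e, s(t e, h e) = s(u, v))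
    (d0 : Matrix E {x // x ∈ K} ℝ)
    (hd0 : ∀ e v, d0 e v = if v = h e then 1 else if v = t e then -1 else 0)
    (ends : ({x // x ∈ K} ⊕ E) → Finset {x // x ∈ K})
    (hends : ∀ z, ends z = Sum.elim (fun x => ({x} : Finset {x // x ∈ K}))
      (fun e => {t e, h e}) z)
    (L : Matrix ({x // x ∈ K} ⊕ E) ({x // x ∈ K} ⊕ E) ℝ)
    (hL : ∀ z w, L z w = if (ends z ∩ ends w).Nonempty then 1 else 0) :
    Module.finrank ℝ (LinearMap.ker (Matrix.toLin' (d0.transpose * d0))) =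
      Module.finrank ℝ (Module.End.eigenspace (Matrix.toLin' L) 1) ∧
    Module.finrank ℝ (LinearMap.ker (Matrix.toLin' (d0 * d0.transpose))) =
      Module.finrank ℝ (Module.End.eigenspace (Matrix.toLin' L) (-1)) := by
  have hne : ∀ e, t e ≠ h e := fun e => (hth e).ne
  have hinj : Function.Injective fun e => s(t e, h e) := fun e f hef =>
    (hbij _ _ (hth f)).unique hef rfl
  have hdeg : ∀ e, Odd (#(t e : Finset V) + #(h e : Finset V)) := by
    intro e
    have ht := hK1 _ (t e).2
    have hh := hK1 _ (h e).2
    rcases (hΓ _ _).mp (hth e) with hlt | hlt <;> have := card_lt_card hlt <;>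
      exact ⟨1, by omega⟩
  have hconn : L = connectionMatrix ℝ t h := by
    ext z w
    rw [hL, hends, hends]
    rfl
  have hrank := rank_unsignedIncidence (fun v : {x // x ∈ K} => #(v : Finset V)) hdeg d0 hd0
  rw [hconn, connectionMatrix_eq_fromBlocks hne hinj, finrank_eigenspace_fromBlocks_one,
    finrank_eigenspace_fromBlocks_neg_one, toLin'_apply', toLin'_apply']
  exact ⟨finrank_ker_mulVecLin_eq_of_rank_eq (by rw [rank_transpose_mul_self, hrank]),
    finrank_ker_mulVecLin_eq_of_rank_eq (by rw [rank_self_mul_transpose, rank_transpose, hrank])⟩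

/-- For a one-dimensional simplicial complex which is a Barycentric refinement,
with connection matrix `L`: the number of connected components
`b0 = dim ker H0` equals the multiplicity of the eigenvalue `1` of `L`, and the
genus `b1 = dim ker H1` equals the multiplicity of the eigenvalue `-1` of `L`. -/
theorem connection_hears_betti_1dim {V : Type*} [Fintype V] [DecidableEq V]
    (K : Finset (Finset V))
    (hK1 : ∀ x ∈ K, x.card = 1 ∨ x.card = 2)
    (hKc : ∀ x ∈ K, ∀ y ⊆ x, y.Nonempty → y ∈ K)
    (Γ : SimpleGraph {x // x ∈ K}) [DecidableRel Γ.Adj]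
    (hΓ : ∀ x y, Γ.Adj x y ↔ ((x : Finset V) ⊂ (y : Finset V) ∨ (y : Finset V) ⊂ (x : Finset V)))
    (E : Type*) [Fintype E] [DecidableEq E]
    (t h : E → {x // x ∈ K})
    (hth : ∀ e, Γ.Adj (t e) (h e))
    (hbij : ∀ u v, Γ.Adj u v → ∃! e, s(t e, h e) = s(u, v))
    (d0 : Matrix E {x // x ∈ K} ℝ)
    (hd0 : ∀ e v, d0 e v = if v = h e then 1 else if v = t e then -1 else 0)
    (ends : ({x // x ∈ K} ⊕ E) → Finset {x // x ∈ K})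
    (hends : ∀ z, ends z = Sum.elim (fun x => ({x} : Finset {x // x ∈ K}))
      (fun e => {t e, h e}) z)
    (L : Matrix ({x // x ∈ K} ⊕ E) ({x // x ∈ K} ⊕ E) ℝ)
    (hL : ∀ z w, L z w = if (ends z ∩ ends w).Nonempty then 1 else 0) :
    Module.finrank ℝ (LinearMap.ker (Matrix.toLin' (d0.transpose * d0))) =
      Module.finrank ℝ (Module.End.eigenspace (Matrix.toLin' L) 1) ∧
    Module.finrank ℝ (LinearMap.ker (Matrix.toLin' (d0 * d0.transpose))) =
      Module.finrank ℝ (Module.End.eigenspace (Matrix.toLin' L) (-1)) :=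
  connection_hears_betti_1dim_general K hK1 Γ hΓ E t h hth hbij d0 hd0 ends hends L hL
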